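/- arXiv:1608.01168 — 7 statements merged into one kernel-verified Lean document; each statement's English description precedes it below -/
import Mathlib

section
/- For α, β > 0 with αβ = 1/(2n) for a positive integer n, and any real γ, the double series B(γ) = 2n · Σ_{k,l∈ℤ} exp(-(π/2)(k²/β² + (l/α + kγ/β)²)) satisfies B(γ) = 2n√2·α · Σ_{k,l∈ℤ} exp(-2πα²(l² + k²n²)) · cos(2πkl(α/β)γ). -/
open Real

/-!
Summing first over `l`, the inner series is a shifted Gaussian in `l`; Jacobi's theta
transformation (Poisson summation) turns it into a Gaussian in the dual variable `m`, the shift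
becoming the cosine phase. Since `1 / β = 2 n α`, the remaining factor `exp (-(π/2) k² / β²)` is
`exp (-2 π α² n² k²)`. The iterated sums are the double sums: the original terms are positive,
and the transformed ones are dominated by a product of two Gaussians.
-/

lemma summable_exp_mul_int_add_sq {c : ℝ} (hc : c < 0) (x : ℝ) :
    Summable fun m : ℤ ↦ exp (c * ((m : ℝ) + x) ^ 2) := by
  -- the terms are `exp (c x²)` times the norms of the theta terms at `τ = -(c/π) i`, `z = x τ`
  have hθ := ((summable_jacobiTheta₂_term_iff ((-c * x / π : ℝ) * Complex.I)
    ((-c / π : ℝ) * Complex.I)).mpr (by simpa using div_pos (neg_pos.mpr hc) pi_pos)).norm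
  refine (hθ.mul_left (exp (c * x ^ 2))).congr fun m ↦ ?_
  rw [norm_jacobiTheta₂_term, ← exp_add]
  simp only [Complex.mul_I_im, Complex.ofReal_re]
  field_simp
  ring_nf

lemma tsum_exp_neg_pi_div_mul_int_add_sq {a : ℝ} (ha : 0 < a) (x : ℝ) :
    ∑' m : ℤ, exp (-π / a * ((m : ℝ) + x) ^ 2) =
      √a * ∑' m : ℤ, exp (-π * a * (m : ℝ) ^ 2) * cos (2 * π * m * x) := by
  have hpoisson := Complex.tsum_exp_neg_quadratic (a := a) (by simpa) (-Complex.I * x)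
  have hsqrt : (a : ℂ) ^ (1 / 2 : ℂ) = (√a : ℝ) := by
    rw [sqrt_eq_rpow, Complex.ofReal_cpow ha.le]; norm_num
  have hterm : ∀ m : ℤ, Complex.exp (-π * a * m ^ 2 + 2 * π * (-Complex.I * x) * m) =
      exp (-π * a * (m : ℝ) ^ 2) * Complex.exp ((-(2 * π * m * x) : ℝ) * Complex.I) := by
    intro m
    rw [Complex.ofReal_exp, ← Complex.exp_add]
    push_cast; ring_nf
  have hshift : ∀ m : ℤ, Complex.exp (-π / a * (m + Complex.I * (-Complex.I * x)) ^ 2) =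
      (exp (-π / a * ((m : ℝ) + x) ^ 2) : ℝ) := by
    intro m
    rw [Complex.ofReal_exp]
    push_cast
    ring_nf
    simp
  have hsum : Summable fun m : ℤ ↦
      (exp (-π * a * (m : ℝ) ^ 2) : ℂ) * Complex.exp ((-(2 * π * m * x) : ℝ) * Complex.I) := by
    have hc : -π * a < 0 := by nlinarith [pi_pos]
    refine Summable.of_norm ((summable_exp_mul_int_add_sq hc 0).congr fun m ↦ ?_)
    rw [norm_mul, Complex.norm_exp_ofReal_mul_I, mul_one, Complex.norm_real, norm_of_nonneg
      (exp_pos _).le, add_zero]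
  simp only [hterm, hshift, hsqrt] at hpoisson
  rw [← Complex.ofReal_tsum, ← Complex.ofReal_one, ← Complex.ofReal_div, ← Complex.ofReal_mul]
    at hpoisson
  have hre := congrArg Complex.re hpoisson
  simp only [Complex.re_tsum hsum, Complex.re_ofReal_mul, Complex.exp_ofReal_mul_I_re, cos_neg,
    Complex.ofReal_re] at hre
  rw [hre]
  field_simp

lemma exp_neg_pi_div_two_mul_sq_add_sq {α : ℝ} (hα : α ≠ 0) (u v l : ℝ) :
    exp (-(π / 2) * (u ^ 2 + (l / α + v) ^ 2)) =
      exp (-(π / 2) * u ^ 2) * exp (-π / (2 * α ^ 2) * (l + α * v) ^ 2) := by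
  rw [← exp_add]
  field_simp
  ring_nf

lemma summable_exp_neg_pi_div_two_mul_sq_add_sq {α : ℝ} (hα : α ≠ 0) (u v : ℝ) :
    Summable fun l : ℤ ↦ exp (-(π / 2) * (u ^ 2 + ((l : ℝ) / α + v) ^ 2)) := by
  simp only [exp_neg_pi_div_two_mul_sq_add_sq hα]
  have hc : -π / (2 * α ^ 2) < 0 := div_neg_of_neg_of_pos (neg_neg_of_pos pi_pos) (by positivity)
  exact (summable_exp_mul_int_add_sq hc _).mul_left _

lemma tsum_exp_neg_pi_div_two_mul_sq_add_sq {α : ℝ} (hα : 0 < α) (u v : ℝ) :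
    ∑' l : ℤ, exp (-(π / 2) * (u ^ 2 + ((l : ℝ) / α + v) ^ 2)) =
      √2 * α * exp (-(π / 2) * u ^ 2) *
        ∑' m : ℤ, exp (-2 * π * α ^ 2 * (m : ℝ) ^ 2) * cos (2 * π * α * v * m) := by
  have hsqrt : √(2 * α ^ 2) = √2 * α := by rw [sqrt_mul zero_le_two, sqrt_sq hα.le]
  simp only [exp_neg_pi_div_two_mul_sq_add_sq hα.ne', tsum_mul_left,
    tsum_exp_neg_pi_div_mul_int_add_sq (by positivity : 0 < 2 * α ^ 2), hsqrt]
  rw [← mul_assoc, mul_comm (rexp _)]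
  exact congrArg _ (tsum_congr fun m ↦ by ring_nf)

lemma summable_exp_mul_quadratic_mul_cos {c b : ℝ} (hc : c < 0) (hb : 0 < b)
    (θ : ℤ × ℤ → ℝ) :
    Summable fun p : ℤ × ℤ ↦ exp (c * ((p.2 : ℝ) ^ 2 + (p.1 : ℝ) ^ 2 * b)) * cos (θ p) := by
  have hgauss {c' : ℝ} (hc' : c' < 0) : Summable fun m : ℤ ↦ exp (c' * (m : ℝ) ^ 2) := by
    simpa using summable_exp_mul_int_add_sq hc' 0
  refine Summable.of_norm_bounded ((hgauss (mul_neg_of_neg_of_pos hc hb)).mul_of_nonneg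
    (hgauss hc) (fun _ ↦ (exp_pos _).le) (fun _ ↦ (exp_pos _).le)) fun p ↦ ?_
  rw [norm_mul, norm_of_nonneg (exp_pos _).le, ← exp_add]
  refine (mul_le_of_le_one_right (exp_pos _).le (abs_cos_le_one _)).trans_eq ?_
  ring_nf

lemma tsum_prod_eq_of_tsum_slices_eq {β γ : Type*} {F G : β × γ → ℝ} (hF : ∀ p, 0 ≤ F p)
    (hG : Summable G) (hFslice : ∀ b, Summable fun c ↦ F (b, c))
    (hslice : ∀ b, ∑' c, F (b, c) = ∑' c, G (b, c)) :
    ∑' p, F p = ∑' p, G p := by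
  have hFsum : Summable F :=
    (summable_prod_of_nonneg hF).2 ⟨hFslice, by simpa only [hslice] using hG.prod⟩
  rw [hFsum.tsum_prod' hFslice, hG.tsum_prod' hG.prod_factor]
  exact tsum_congr hslice

theorem upper_bound_poisson_identity (n : ℕ) (hn : 0 < n) (α β γ : ℝ)
    (hα : 0 < α) (hβ : 0 < β) (hαβ : α * β = 1 / (2 * n))
    (B : ℝ → ℝ)
    (hB : ∀ γ : ℝ, B γ = (2 * n) * ∑' p : ℤ × ℤ,
      Real.exp (-(π / 2) * (((p.1 : ℝ) / β) ^ 2 + ((p.2 : ℝ) / α + (p.1 : ℝ) * γ / β) ^ 2))) :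
    B γ = (2 * n) * Real.sqrt 2 * α * ∑' p : ℤ × ℤ,
      Real.exp (-2 * π * α ^ 2 * ((p.2 : ℝ) ^ 2 + (p.1 : ℝ) ^ 2 * (n : ℝ) ^ 2)) *
        Real.cos (2 * π * (p.1 : ℝ) * (p.2 : ℝ) * (α / β) * γ) := by
  have hβinv : β⁻¹ = 2 * n * α := by
    field_simp at hαβ ⊢; linarith
  have hc : -2 * π * α ^ 2 < 0 := by simp only [neg_mul, neg_lt_zero]; positivity
  have hG := summable_exp_mul_quadratic_mul_cos hc
    (by positivity : (0 : ℝ) < n ^ 2) fun p ↦ 2 * π * (p.1 : ℝ) * (p.2 : ℝ) * (α / β) * γ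
  rw [hB, tsum_prod_eq_of_tsum_slices_eq (fun _ ↦ (exp_pos _).le) (hG.mul_left (√2 * α)),
    tsum_mul_left]
  · ring
  · exact fun k ↦ summable_exp_neg_pi_div_two_mul_sq_add_sq hα.ne' (k / β) (k * γ / β)
  intro k
  dsimp only
  rw [tsum_mul_left, tsum_exp_neg_pi_div_two_mul_sq_add_sq hα, mul_assoc, ← tsum_mul_left]
  congr 1
  refine tsum_congr fun m ↦ ?_
  rw [← mul_assoc, ← exp_add, div_eq_mul_inv (k : ℝ) β, hβinv]
  ring_nf
end

section
/- For α, β > 0 with αβ = 1/(2n) for a positive integer n, the function B(γ) = 2n · Σ_{k,l∈ℤ} exp(-(π/2)(k²/β² + (l/α + kγ/β)²)) attains its global maximum over γ ∈ ℝ exactly at the points γ ∈ (β/α)·ℤ. -/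
/-!
Summing over `l` first, `B γ = 2n ∑ₖ exp(-πk²/(2β²)) θ(k αγ/β)` with the periodized Gaussian
`θ x = ∑ₗ exp(-π(l + x)²/(2α²))`. By Poisson summation `θ` is a cosine series with positive
coefficients, so `θ x ≤ θ 0`, strictly unless `x ∈ ℤ`. Hence `B γ ≤ B 0`; equality forces the
`k = 1` term to be maximal, i.e. `αγ/β ∈ ℤ`, and conversely `θ` is `1`-periodic.
-/

open Real

noncomputable def periodicGaussian (a x : ℝ) : ℝ := ∑' l : ℤ, exp (-π * a * (l + x) ^ 2)

section PeriodicGaussian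

variable {a : ℝ}

lemma summable_exp_neg_mul_int_add_sq (ha : 0 < a) (x : ℝ) :
    Summable fun l : ℤ => exp (-π * a * (l + x) ^ 2) := by
  have h : Summable fun n : ℤ => jacobiTheta₂_term n (a * x * Complex.I) (a * Complex.I) :=
    (summable_jacobiTheta₂_term_iff _ _).mpr (by simpa using ha)
  refine ((summable_norm_iff.mpr h).mul_left (exp (-π * a * x ^ 2))).congr fun l => ?_
  rw [norm_jacobiTheta₂_term, ← exp_add]
  congr 1
  simp only [Complex.mul_im, Complex.I_im, Complex.I_re, Complex.ofReal_re, Complex.ofReal_im,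
    Complex.mul_re]
  ring

lemma periodicGaussian_nonneg (a x : ℝ) : 0 ≤ periodicGaussian a x :=
  tsum_nonneg fun _ => (exp_pos _).le

lemma periodicGaussian_add_int (a x : ℝ) (m : ℤ) :
    periodicGaussian a (x + m) = periodicGaussian a x := by
  unfold periodicGaussian
  conv_rhs => rw [← (Equiv.addRight m).tsum_eq]
  refine tsum_congr fun l => ?_
  simp only [Equiv.coe_addRight, Int.cast_add]
  ring_nf

lemma summable_exp_neg_div_mul_int_sq (ha : 0 < a) :
    Summable fun n : ℤ => exp (-π / a * n ^ 2) := by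
  simpa [div_eq_mul_inv] using summable_exp_neg_mul_int_add_sq (inv_pos.2 ha) 0

lemma summable_exp_mul_cos (ha : 0 < a) (x : ℝ) :
    Summable fun n : ℤ => exp (-π / a * n ^ 2) * cos (2 * π * n * x) := by
  refine (summable_exp_neg_div_mul_int_sq ha).of_norm_bounded fun n => ?_
  rw [norm_mul, norm_of_nonneg (exp_pos _).le]
  exact mul_le_of_le_one_right (exp_pos _).le (abs_cos_le_one _)

lemma periodicGaussian_eq_cos_series (ha : 0 < a) (x : ℝ) :
    periodicGaussian a x =
      (√a)⁻¹ * ∑' n : ℤ, exp (-π / a * n ^ 2) * cos (2 * π * n * x) :=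
  open Complex in by
  set f : ℤ → ℂ := fun n =>
    Complex.exp (-π * ((a⁻¹ : ℝ) : ℂ) * n ^ 2 + 2 * π * (-I * x) * n)
  have hf_eq (n : ℤ) :
      f n = Complex.exp ((-π / a * n ^ 2 : ℝ) + (-(2 * π * n * x) : ℝ) * I) := by
    simp only [f]; push_cast; ring_nf
  have hf : Summable f := by
    refine Summable.of_norm ((summable_exp_neg_div_mul_int_sq ha).congr fun n => ?_)
    rw [hf_eq, norm_exp, add_re, re_ofReal_mul, I_re, mul_zero, add_zero, ofReal_re]
  -- Poisson summation for the Gaussian, read from right to left with `a⁻¹` and shift `-I * x`.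
  have hpoisson :=
    Complex.tsum_exp_neg_quadratic (a := ((a⁻¹ : ℝ) : ℂ)) (by simpa using ha) (-I * x)
  have hsqrt : (1 : ℂ) / ((a⁻¹ : ℝ) : ℂ) ^ (1 / 2 : ℂ) = (√a : ℝ) := by
    rw [(by norm_num : (1 / 2 : ℂ) = ((1 / 2 : ℝ) : ℂ)), ← ofReal_cpow (inv_pos.2 ha).le,
      ← sqrt_eq_rpow, sqrt_inv, ← ofReal_one, ← ofReal_div, one_div, inv_inv]
  have hgauss (n : ℤ) : Complex.exp (-π / ((a⁻¹ : ℝ) : ℂ) * (n + I * (-I * x)) ^ 2)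
      = (Real.exp (-π * a * (n + x) ^ 2) : ℝ) := by
    push_cast
    ring_nf
    simp
  rw [tsum_congr hgauss, ← ofReal_tsum, hsqrt, ← ofReal_mul] at hpoisson
  have hre := congrArg re hpoisson
  rw [re_tsum hf, ofReal_re] at hre
  simp only [hf_eq, exp_re, add_re, add_im, re_ofReal_mul, im_ofReal_mul, ofReal_re, ofReal_im,
    I_re, I_im, mul_zero, add_zero, zero_add, mul_one, Real.cos_neg] at hre
  rw [periodicGaussian, hre, inv_mul_cancel_left₀ (sqrt_pos.2 ha).ne']

lemma periodicGaussian_le (ha : 0 < a) (x : ℝ) :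
    periodicGaussian a x ≤ periodicGaussian a 0 := by
  rw [periodicGaussian_eq_cos_series ha, periodicGaussian_eq_cos_series ha]
  gcongr with n
  · exact summable_exp_mul_cos ha x
  · exact summable_exp_mul_cos ha 0
  · simpa using cos_le_one _

lemma periodicGaussian_lt (ha : 0 < a) {x : ℝ} (hx : ∀ m : ℤ, x ≠ m) :
    periodicGaussian a x < periodicGaussian a 0 := by
  rw [periodicGaussian_eq_cos_series ha, periodicGaussian_eq_cos_series ha]
  refine mul_lt_mul_of_pos_left (Summable.tsum_lt_tsum (i := 1) (fun n => ?_) ?_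
    (summable_exp_mul_cos ha x) (summable_exp_mul_cos ha 0)) (by positivity)
  · gcongr
    simpa using cos_le_one _
  · gcongr
    rw [mul_zero, cos_zero]
    refine (cos_le_one _).lt_of_ne fun h => ?_
    obtain ⟨m, hm⟩ := (cos_eq_one_iff _).mp h
    exact hx m (mul_left_cancel₀ (by positivity : 2 * π ≠ 0) (by push_cast at hm; linarith))

end PeriodicGaussian

section WeightedSum

variable {a : ℝ} {c : ℤ → ℝ}

lemma summable_mul_periodicGaussian (ha : 0 < a) (hc : Summable c) (hc0 : ∀ k, 0 ≤ c k)
    (x : ℝ) : Summable fun k : ℤ => c k * periodicGaussian a (k * x) :=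
  (hc.mul_right (periodicGaussian a 0)).of_nonneg_of_le
    (fun k => mul_nonneg (hc0 k) (periodicGaussian_nonneg _ _))
    fun k => mul_le_mul_of_nonneg_left (periodicGaussian_le ha _) (hc0 k)

lemma tsum_mul_periodicGaussian_le (ha : 0 < a) (hc : Summable c) (hc0 : ∀ k, 0 ≤ c k)
    (x : ℝ) :
    ∑' k : ℤ, c k * periodicGaussian a (k * x) ≤ ∑' k : ℤ, c k * periodicGaussian a 0 :=
  (summable_mul_periodicGaussian ha hc hc0 x).tsum_le_tsum
    (fun k => mul_le_mul_of_nonneg_left (periodicGaussian_le ha _) (hc0 k))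
    (hc.mul_right _)

lemma tsum_mul_periodicGaussian_eq_iff (ha : 0 < a) (hc : Summable c) (hc0 : ∀ k, 0 < c k)
    (x : ℝ) :
    ∑' k : ℤ, c k * periodicGaussian a (k * x) = ∑' k : ℤ, c k * periodicGaussian a 0 ↔
      ∃ m : ℤ, x = m := by
  constructor
  · intro heq
    by_contra! hx
    refine heq.not_lt (Summable.tsum_lt_tsum (i := 1)
      (fun k => mul_le_mul_of_nonneg_left (periodicGaussian_le ha _) (hc0 k).le) ?_
      (summable_mul_periodicGaussian ha hc (fun k => (hc0 k).le) x) (hc.mul_right _))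
    exact mul_lt_mul_of_pos_left (periodicGaussian_lt ha (by simpa using hx)) (hc0 1)
  · rintro ⟨m, rfl⟩
    refine tsum_congr fun k => ?_
    rw [← Int.cast_mul, ← zero_add ((k * m : ℤ) : ℝ), periodicGaussian_add_int]

end WeightedSum

lemma summable_exp_neg_mul_int_div_sq {β : ℝ} (hβ : β ≠ 0) :
    Summable fun k : ℤ => exp (-(π / 2) * (k / β) ^ 2) :=
  (summable_exp_neg_div_mul_int_sq (a := 2 * β ^ 2) (by positivity)).congr fun k => by
    congr 1; field_simp

lemma exp_lattice_term_eq {α β : ℝ} (hα : α ≠ 0) (hβ : β ≠ 0) (γ : ℝ) (k l : ℤ) :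
    exp (-(π / 2) * ((k / β) ^ 2 + (l / α + k * γ / β) ^ 2)) =
      exp (-(π / 2) * (k / β) ^ 2) *
        exp (-π * (1 / (2 * α ^ 2)) * (l + k * (α * γ / β)) ^ 2) := by
  rw [← exp_add]
  congr 1
  field_simp
  ring

lemma tsum_lattice_gaussian_eq {α β : ℝ} (hα : α ≠ 0) (hβ : β ≠ 0) (γ : ℝ) :
    ∑' p : ℤ × ℤ, exp (-(π / 2) * ((p.1 / β) ^ 2 + (p.2 / α + p.1 * γ / β) ^ 2)) =
      ∑' k : ℤ, exp (-(π / 2) * (k / β) ^ 2) *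
        periodicGaussian (1 / (2 * α ^ 2)) (k * (α * γ / β)) := by
  have ha : 0 < 1 / (2 * α ^ 2) := by positivity
  have hrow (k : ℤ) :
      exp (-(π / 2) * (k / β) ^ 2) * periodicGaussian (1 / (2 * α ^ 2)) (k * (α * γ / β)) =
        ∑' l : ℤ, exp (-(π / 2) * ((k / β) ^ 2 + (l / α + k * γ / β) ^ 2)) := by
    simp only [periodicGaussian, ← tsum_mul_left, exp_lattice_term_eq hα hβ]
  have hrows (k : ℤ) :
      Summable fun l : ℤ => exp (-(π / 2) * ((k / β) ^ 2 + (l / α + k * γ / β) ^ 2)) := by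
    simpa only [exp_lattice_term_eq hα hβ] using
      (summable_exp_neg_mul_int_add_sq ha _).mul_left (exp (-(π / 2) * (k / β) ^ 2))
  have hsum : Summable fun p : ℤ × ℤ =>
      exp (-(π / 2) * ((p.1 / β) ^ 2 + (p.2 / α + p.1 * γ / β) ^ 2)) := by
    refine (summable_prod_of_nonneg fun _ => (exp_pos _).le).2 ⟨hrows, ?_⟩
    exact (summable_mul_periodicGaussian ha (summable_exp_neg_mul_int_div_sq hβ)
      (fun _ => (exp_pos _).le) (α * γ / β)).congr hrow
  rw [hsum.tsum_prod' hrows]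
  exact tsum_congr fun k => (hrow k).symm

theorem upper_bound_max_iff_rectangular_general (n : ℕ) (hn : 0 < n) (α β : ℝ)
    (hα : 0 < α) (hβ : 0 < β)
    (B : ℝ → ℝ)
    (hB : ∀ γ : ℝ, B γ = (2 * n) * ∑' p : ℤ × ℤ,
      Real.exp (-(π / 2) * (((p.1 : ℝ) / β) ^ 2 + ((p.2 : ℝ) / α + (p.1 : ℝ) * γ / β) ^ 2)))
    (γ : ℝ) :
    B γ ≤ B 0 ∧ (B γ = B 0 ↔ ∃ m : ℤ, γ = (β / α) * m) := by
  have ha : 0 < 1 / (2 * α ^ 2) := by positivity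
  have hc := summable_exp_neg_mul_int_div_sq hβ.ne'
  have h2n : (0 : ℝ) < 2 * n := by positivity
  rw [hB, hB, tsum_lattice_gaussian_eq hα.ne' hβ.ne', tsum_lattice_gaussian_eq hα.ne' hβ.ne']
  simp only [mul_zero, zero_div]
  refine ⟨mul_le_mul_of_nonneg_left
    (tsum_mul_periodicGaussian_le ha hc (fun _ => (exp_pos _).le) _) h2n.le, ?_⟩
  rw [mul_right_inj' h2n.ne', tsum_mul_periodicGaussian_eq_iff ha hc (fun _ => exp_pos _)]
  refine exists_congr fun m => ?_
  rw [div_eq_iff hβ.ne', div_mul_eq_mul_div, eq_div_iff hα.ne']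
  constructor <;> intro h <;> linarith

theorem upper_bound_max_iff_rectangular (n : ℕ) (hn : 0 < n) (α β : ℝ)
    (hα : 0 < α) (hβ : 0 < β) (hαβ : α * β = 1 / (2 * n))
    (B : ℝ → ℝ)
    (hB : ∀ γ : ℝ, B γ = (2 * n) * ∑' p : ℤ × ℤ,
      Real.exp (-(π / 2) * (((p.1 : ℝ) / β) ^ 2 + ((p.2 : ℝ) / α + (p.1 : ℝ) * γ / β) ^ 2)))
    (γ : ℝ) :
    B γ ≤ B 0 ∧ (B γ = B 0 ↔ ∃ m : ℤ, γ = (β / α) * m) :=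
  upper_bound_max_iff_rectangular_general n hn α β hα hβ B hB γ
end

section
/- Let g_γ(t) = 2^{1/4}·exp(πiγt²)·exp(-πt²) be the chirped Gaussian. For all real α, β > 0, real γ, and integers k, l, the inner product ⟨g_{-γ}, M_{l/α} T_{k/β} g_{-γ}⟩ in L²(ℝ) equals exp(-πi·kl/(αβ)) · exp(-(π/2)(k²/β² + (l/α + kγ/β)²)), where (M_ω f)(t) = e^{2πiωt} f(t) and (T_x f)(t) = f(t - x). -/
open Real MeasureTheory

set_option maxHeartbeats 1000000 in
theorem chirped_gaussian_inner_product (α β γ : ℝ) (hα : 0 < α) (hβ : 0 < β)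
    (k l : ℤ)
    (g : ℝ → ℝ → ℂ)
    (hg : ∀ c t : ℝ, g c t = (2 : ℂ) ^ ((1 : ℂ) / 4) *
      Complex.exp (π * Complex.I * c * t ^ 2) * Complex.exp (-π * t ^ 2)) :
    ∫ t : ℝ, g (-γ) t *
        (starRingEnd ℂ) (Complex.exp (2 * π * Complex.I * ((l : ℝ) / α) * t) *
          g (-γ) (t - (k : ℝ) / β)) =
      Complex.exp (-π * Complex.I * ((k : ℝ) * l / (α * β))) *
        Complex.exp (-(π / 2) * (((k : ℝ) / β) ^ 2 + ((l : ℝ) / α + (k : ℝ) * γ / β) ^ 2)) := by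
  have hπ : (π : ℂ) ≠ 0 := Complex.ofReal_ne_zero.mpr Real.pi_ne_zero
  have hαc : (α : ℂ) ≠ 0 := Complex.ofReal_ne_zero.mpr hα.ne'
  have hβc : (β : ℂ) ≠ 0 := Complex.ofReal_ne_zero.mpr hβ.ne'
  set x : ℂ := (k : ℂ) / β with hx
  set y : ℂ := (l : ℂ) / α + (k : ℂ) * γ / β with hy
  set b : ℂ := -2 * π with hb
  set c : ℂ := 2 * π * x - 2 * π * Complex.I * y with hc
  set d : ℂ := π * Complex.I * γ * x ^ 2 - π * x ^ 2 with hd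
  have hA : (starRingEnd ℂ) ((2 : ℂ) ^ ((1 : ℂ) / 4)) = (2 : ℂ) ^ ((1 : ℂ) / 4) := by
    have h : (2 : ℂ) ^ ((1 : ℂ) / 4) = Complex.ofReal ((2 : ℝ) ^ ((1 : ℝ) / 4)) := by
      rw [Complex.ofReal_cpow (by norm_num : (0:ℝ) ≤ 2)]
      norm_num
    rw [h, Complex.conj_ofReal]
  have hAA : (2 : ℂ) ^ ((1 : ℂ) / 4) * (2 : ℂ) ^ ((1 : ℂ) / 4) = (2 : ℂ) ^ ((1 : ℂ) / 2) := by
    rw [← Complex.cpow_add _ _ (by norm_num)]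
    norm_num
  have hpt : ∀ t : ℝ, g (-γ) t *
        (starRingEnd ℂ) (Complex.exp (2 * π * Complex.I * ((l : ℝ) / α) * t) *
          g (-γ) (t - (k : ℝ) / β)) =
      (2 : ℂ) ^ ((1 : ℂ) / 2) * Complex.exp (b * t ^ 2 + c * t + d) := by
    intro t
    simp only [hg, map_mul, hA, ← Complex.exp_conj, map_sub, map_neg, map_pow,
      map_mul, Complex.conj_I, Complex.conj_ofReal, map_div₀, map_intCast,
      map_ofNat, map_one]
    rw [← hAA]
    push_cast
    rw [show ((2:ℂ)^((1:ℂ)/4) * Complex.exp (↑π * Complex.I * -↑γ * ↑t ^ 2) *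
        Complex.exp (-↑π * ↑t ^ 2)) *
        (Complex.exp (2 * ↑π * -Complex.I * ((l:ℂ) / ↑α) * ↑t) *
          ((2:ℂ)^((1:ℂ)/4) * Complex.exp (↑π * -Complex.I * -↑γ * (↑t - (k:ℂ) / ↑β) ^ 2) *
            Complex.exp (-↑π * (↑t - (k:ℂ) / ↑β) ^ 2))) =
        (2:ℂ)^((1:ℂ)/4) * (2:ℂ)^((1:ℂ)/4) *
        (Complex.exp (↑π * Complex.I * -↑γ * ↑t ^ 2) * Complex.exp (-↑π * ↑t ^ 2) *
        Complex.exp (2 * ↑π * -Complex.I * ((l:ℂ) / ↑α) * ↑t) *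
        Complex.exp (↑π * -Complex.I * -↑γ * (↑t - (k:ℂ) / ↑β) ^ 2) *
        Complex.exp (-↑π * (↑t - (k:ℂ) / ↑β) ^ 2)) from by ring]
    congr 1
    rw [← Complex.exp_add, ← Complex.exp_add, ← Complex.exp_add, ← Complex.exp_add]
    congr 1
    rw [hc, hd, hb, hx, hy]
    field_simp
    ring
  rw [MeasureTheory.integral_congr_ae (Filter.Eventually.of_forall hpt),
    MeasureTheory.integral_const_mul,
    integral_cexp_quadratic (by simp [hb]; positivity) c d]
  have hhalf : (↑π / -b) = ((1:ℂ)/2) := by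
    rw [hb]; field_simp
  rw [hhalf]
  have h2 : ((2:ℝ) : ℂ) ^ ((1 : ℂ) / 2) * (((1:ℝ)/2 : ℝ) : ℂ) ^ ((1 : ℂ) / 2) = 1 := by
    rw [← Complex.mul_cpow_ofReal_nonneg (by norm_num) (by norm_num)]
    norm_num
  push_cast at h2
  rw [show ((2:ℂ)^((1:ℂ)/2) * (((1:ℂ)/2) ^ ((1:ℂ)/2) * Complex.exp (d - c^2/(4*b))))
      = ((2:ℂ)^((1:ℂ)/2) * ((1:ℂ)/2) ^ ((1:ℂ)/2)) * Complex.exp (d - c^2/(4*b)) from by ring,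
    h2, one_mul, ← Complex.exp_add]
  congr 1
  have hcsq : c ^ 2 / (4 * b) = -(↑π / 2) * (x - Complex.I * y) ^ 2 := by
    rw [hc, hb]
    field_simp
    ring
  rw [hcsq, hd, hx, hy]
  push_cast
  linear_combination (↑π / 2 : ℂ) * ((l : ℂ) / ↑α + ↑k * ↑γ / ↑β) ^ 2 * Complex.I_sq
end

section
/- Define Jacobi's theta functions θ₂(s) = Σ_{k∈ℤ} e^{-π(k-1/2)²s}, θ₃(s) = Σ_{k∈ℤ} e^{-πk²s}, θ₄(s) = Σ_{k∈ℤ}(-1)^k e^{-πk²s} for s > 0. Then θ₃(s)⁴ = θ₂(s)⁴ + θ₄(s)⁴. -/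
open Real

noncomputable section JacobiAux

abbrev Wt : Type := ℤ × ℤ × ℤ × ℤ
abbrev Vt : Type := (ℤ × ℤ) × (ℤ × ℤ)

def Qe : Bool × Wt ≃ Vt where
  toFun p := ((p.2.1, p.2.2.1), (p.2.2.2.1,
    2 * p.2.2.2.2 + (if p.1 then 1 else 0) - p.2.1 - p.2.2.1 - p.2.2.2.1))
  invFun v := (decide ((v.1.1 + v.1.2 + v.2.1 + v.2.2) % 2 = 1),
    (v.1.1, v.1.2, v.2.1, (v.1.1 + v.1.2 + v.2.1 + v.2.2) / 2))
  left_inv := by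
    rintro ⟨ε, a, b, c, k⟩
    rcases ε <;> simp <;> omega
  right_inv := by
    rintro ⟨⟨a, b⟩, c, d⟩
    by_cases hp : (a + b + c + d) % 2 = 1 <;> simp [hp] <;> omega

def We : Wt ≃ Wt where
  toFun w := (w.2.2.2 - 1, w.1 + w.2.1 - w.2.2.2, w.1 + w.2.2.1 - w.2.2.2, w.1 - 1)
  invFun w := (w.2.2.2 + 1, w.1 + w.2.1 - w.2.2.2, w.1 + w.2.2.1 - w.2.2.2, w.1 + 1)
  left_inv := by rintro ⟨a, b, c, k⟩; simp only [Prod.mk.injEq]; omega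
  right_inv := by rintro ⟨a, b, c, k⟩; simp only [Prod.mk.injEq]; omega

def Nf : Wt ≃ Wt where
  toFun w := (w.1, w.2.1, w.2.2.1, w.1 + w.2.1 + w.2.2.1 - w.2.2.2)
  invFun w := (w.1, w.2.1, w.2.2.1, w.1 + w.2.1 + w.2.2.1 - w.2.2.2)
  left_inv := by rintro ⟨a, b, c, k⟩; simp
  right_inv := by rintro ⟨a, b, c, k⟩; simp

lemma split_tsum (F : Vt → ℝ) (hF : Summable F) :
    ∑' v, F v = (∑' w : Wt, F (Qe (false, w))) + ∑' w : Wt, F (Qe (true, w)) := by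
  have hQ : Summable fun p : Bool × Wt => F (Qe p) := Qe.summable_iff.mpr hF
  rw [← Qe.tsum_eq F, Summable.tsum_prod' hQ fun b => hQ.comp_injective fun w w' hw => by
    simpa using hw, tsum_bool]

lemma pow_four_tsum {f : ℤ → ℝ} (hf : Summable fun k => ‖f k‖) :
    (∑' k, f k) ^ 4 = ∑' v : Vt, f v.1.1 * f v.1.2 * (f v.2.1 * f v.2.2) := by
  have h2 : (∑' k, f k) * (∑' k, f k) = ∑' p : ℤ × ℤ, f p.1 * f p.2 :=
    tsum_mul_tsum_of_summable_norm hf hf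
  have h2n : Summable fun p : ℤ × ℤ => ‖f p.1 * f p.2‖ := by
    have := summable_mul_of_summable_norm (f := fun k : ℤ => ‖f k‖)
      (g := fun k : ℤ => ‖f k‖) (by simpa using hf) (by simpa using hf)
    exact this.congr fun p => (norm_mul _ _).symm
  have h4 := tsum_mul_tsum_of_summable_norm h2n h2n
  have hx : ∀ x : ℝ, x ^ 4 = x * x * (x * x) := fun x => by ring
  rw [hx, h2, h4]

lemma summable_four {f : ℤ → ℝ} (hf : Summable fun k => ‖f k‖) :
    Summable fun v : Vt => f v.1.1 * f v.1.2 * (f v.2.1 * f v.2.2) := by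
  have h2n : Summable fun p : ℤ × ℤ => ‖f p.1 * f p.2‖ := by
    have := summable_mul_of_summable_norm (f := fun k : ℤ => ‖f k‖)
      (g := fun k : ℤ => ‖f k‖) (by simpa using hf) (by simpa using hf)
    exact this.congr fun p => (norm_mul _ _).symm
  exact (summable_mul_of_summable_norm (f := fun p : ℤ × ℤ => f p.1 * f p.2)
    (g := fun p : ℤ × ℤ => f p.1 * f p.2) h2n h2n).congr fun v => rfl

lemma summable_exp_linquad (s t : ℝ) (hs : 0 < s) :
    Summable fun n : ℤ => Real.exp (-π * (n : ℝ) ^ 2 * s + t * n) := by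
  have h : Summable fun n : ℤ =>
      ‖jacobiTheta₂_term n (-(t / (2 * π)) * Complex.I) (s * Complex.I)‖ := by
    refine ((summable_jacobiTheta₂_term_iff _ _).mpr ?_).norm
    simpa using hs
  refine h.congr fun n => ?_
  rw [norm_jacobiTheta₂_term]
  congr 1
  have hπ : (π : ℝ) ≠ 0 := Real.pi_ne_zero
  rw [Complex.mul_I_im, Complex.mul_I_im]
  simp only [Complex.ofReal_re, Complex.neg_re, Complex.ofReal_div]
  rw [show ((t : ℂ) / (2 * (π : ℂ))) = ((t / (2 * π) : ℝ) : ℂ) by push_cast; ring,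
    Complex.ofReal_re]
  field_simp
  ring

def E3 (s : ℝ) (v : Vt) : ℝ :=
  rexp (-π * ((v.1.1 : ℝ) ^ 2 + (v.1.2 : ℝ) ^ 2 + (v.2.1 : ℝ) ^ 2 + (v.2.2 : ℝ) ^ 2) * s)

def sg (v : Vt) : ℤ := v.1.1 + v.1.2 + v.2.1 + v.2.2

def E4 (s : ℝ) (v : Vt) : ℝ := (-1 : ℝ) ^ (sg v) * E3 s v

def E2 (s : ℝ) (v : Vt) : ℝ :=
  rexp (-π * (((v.1.1 : ℝ) - 1 / 2) ^ 2 + ((v.1.2 : ℝ) - 1 / 2) ^ 2 +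
    ((v.2.1 : ℝ) - 1 / 2) ^ 2 + ((v.2.2 : ℝ) - 1 / 2) ^ 2) * s)

def Pf (s : ℝ) (w : Wt) : ℝ := E3 s (Qe (true, w))

lemma mul4 (p q r t A B C D : ℝ) :
    (p * A) * (q * B) * ((r * C) * (t * D)) = p * q * r * t * (A * B * (C * D)) := by ring

end JacobiAux

theorem jacobi_quartic_identity (s : ℝ) (hs : 0 < s) :
    (∑' k : ℤ, Real.exp (-π * (k : ℝ) ^ 2 * s)) ^ 4 =
      (∑' k : ℤ, Real.exp (-π * ((k : ℝ) - 1 / 2) ^ 2 * s)) ^ 4 +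
        (∑' k : ℤ, (-1 : ℝ) ^ k * Real.exp (-π * (k : ℝ) ^ 2 * s)) ^ 4 := by
  have hne : (-1 : ℝ) ≠ 0 := by norm_num
  -- summability of the three series (with norms)
  have hf0 : Summable fun k : ℤ => Real.exp (-π * (k : ℝ) ^ 2 * s) := by
    refine (summable_exp_linquad s 0 hs).congr fun k => ?_
    norm_num
  have hfn : Summable fun k : ℤ => ‖Real.exp (-π * (k : ℝ) ^ 2 * s)‖ :=
    hf0.congr fun k => (Real.norm_of_nonneg (Real.exp_pos _).le).symm
  have hg0 : Summable fun k : ℤ => Real.exp (-π * ((k : ℝ) - 1 / 2) ^ 2 * s) := by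
    refine ((summable_exp_linquad s (π * s) hs).mul_right (Real.exp (-(π * s) / 4))).congr
      fun k => ?_
    rw [← Real.exp_add]
    congr 1
    ring
  have hgn : Summable fun k : ℤ => ‖Real.exp (-π * ((k : ℝ) - 1 / 2) ^ 2 * s)‖ :=
    hg0.congr fun k => (Real.norm_of_nonneg (Real.exp_pos _).le).symm
  have hhn : Summable fun k : ℤ => ‖(-1 : ℝ) ^ k * Real.exp (-π * (k : ℝ) ^ 2 * s)‖ := by
    refine hf0.congr fun k => ?_
    rw [norm_mul, norm_zpow]
    simp [Real.norm_of_nonneg (Real.exp_pos _).le]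
  -- the three fourth powers as quadruple sums
  have h3 : (∑' k : ℤ, Real.exp (-π * (k : ℝ) ^ 2 * s)) ^ 4 = ∑' v : Vt, E3 s v := by
    rw [pow_four_tsum hfn]
    refine tsum_congr fun v => ?_
    rw [← Real.exp_add, ← Real.exp_add, ← Real.exp_add, E3]
    congr 1
    ring
  have h2 : (∑' k : ℤ, Real.exp (-π * ((k : ℝ) - 1 / 2) ^ 2 * s)) ^ 4 = ∑' v : Vt, E2 s v := by
    rw [pow_four_tsum hgn]
    refine tsum_congr fun v => ?_
    rw [← Real.exp_add, ← Real.exp_add, ← Real.exp_add, E2]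
    congr 1
    ring
  have h4 : (∑' k : ℤ, (-1 : ℝ) ^ k * Real.exp (-π * (k : ℝ) ^ 2 * s)) ^ 4
      = ∑' v : Vt, E4 s v := by
    rw [pow_four_tsum hhn]
    refine tsum_congr fun v => ?_
    rw [mul4, ← Real.exp_add, ← Real.exp_add, ← Real.exp_add,
      ← zpow_add₀ hne, ← zpow_add₀ hne, ← zpow_add₀ hne, E4, sg, E3]
    congr 2
    ring
  -- summability of the quadruple sums
  have S3 : Summable (E3 s) := by
    refine (summable_four hfn).congr fun v => ?_
    rw [← Real.exp_add, ← Real.exp_add, ← Real.exp_add, E3]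
    congr 1
    ring
  have S2 : Summable (E2 s) := by
    refine (summable_four hgn).congr fun v => ?_
    rw [← Real.exp_add, ← Real.exp_add, ← Real.exp_add, E2]
    congr 1
    ring
  have S4 : Summable (E4 s) := by
    refine (summable_four hhn).congr fun v => ?_
    rw [mul4, ← Real.exp_add, ← Real.exp_add, ← Real.exp_add,
      ← zpow_add₀ hne, ← zpow_add₀ hne, ← zpow_add₀ hne, E4, sg, E3]
    congr 2
    ring
  -- RHS: θ₃⁴ - θ₄⁴ = 2 ∑' Pf
  have hR : (∑' k : ℤ, Real.exp (-π * (k : ℝ) ^ 2 * s)) ^ 4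
      - (∑' k : ℤ, (-1 : ℝ) ^ k * Real.exp (-π * (k : ℝ) ^ 2 * s)) ^ 4
      = 2 * ∑' w : Wt, Pf s w := by
    rw [h3, h4, ← Summable.tsum_sub S3 S4, split_tsum _ (S3.sub S4)]
    have hfalse : ∀ w : Wt, E3 s (Qe (false, w)) - E4 s (Qe (false, w)) = 0 := by
      rintro ⟨a, b, c, k⟩
      have hσ : sg (Qe (false, (a, b, c, k))) = 2 * k := by
        simp only [Qe, Equiv.coe_fn_mk, sg]
        norm_num
      rw [E4, hσ, Even.neg_one_zpow ⟨k, by ring⟩, one_mul, sub_self]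
    have htrue : ∀ w : Wt, E3 s (Qe (true, w)) - E4 s (Qe (true, w)) = 2 * Pf s w := by
      rintro ⟨a, b, c, k⟩
      have hσ : sg (Qe (true, (a, b, c, k))) = 2 * k + 1 := by
        simp only [Qe, Equiv.coe_fn_mk, sg]
        norm_num
      rw [E4, hσ, Odd.neg_one_zpow ⟨k, by ring⟩, Pf]
      ring
    rw [tsum_congr hfalse, tsum_zero, zero_add, tsum_congr htrue, tsum_mul_left]
  -- LHS: θ₂⁴ = ∑' Pf + ∑' Pf
  have hL : (∑' k : ℤ, Real.exp (-π * ((k : ℝ) - 1 / 2) ^ 2 * s)) ^ 4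
      = (∑' w : Wt, Pf s w) + ∑' w : Wt, Pf s w := by
    rw [h2, split_tsum _ S2]
    have hfalse : ∀ w : Wt, E2 s (Qe (false, w)) = Pf s (We w) := by
      rintro ⟨a, b, c, k⟩
      simp only [E2, Pf, E3, Qe, We, Equiv.coe_fn_mk]
      congr 1
      push_cast
      ring
    have htrue : ∀ w : Wt, E2 s (Qe (true, w)) = Pf s ((Nf.trans We) w) := by
      rintro ⟨a, b, c, k⟩
      simp only [E2, Pf, E3, Qe, We, Nf, Equiv.trans_apply, Equiv.coe_fn_mk]
      congr 1
      push_cast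
      ring
    rw [tsum_congr hfalse, We.tsum_eq (Pf s), tsum_congr htrue,
      (Nf.trans We).tsum_eq (Pf s)]
  linarith [hR, hL]
end

section
/- We have (Σ_{k∈ℤ} e^{-πk²})⁴ = 2·(Σ_{k∈ℤ}(-1)^k e^{-πk²})⁴, i.e., θ₃(1)⁴ = 2·θ₄(1)⁴. -/
open Real

lemma aux_summable_nat (c d : ℝ) (hc : 0 < c) :
    Summable fun n : ℕ => Real.exp (-c * ((n : ℝ) + d) ^ 2) := by
  have hlt : Real.exp (-c) < 1 := by
    rw [Real.exp_lt_one_iff]; linarith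
  refine Summable.of_nonneg_of_le (fun n => (Real.exp_pos _).le) (fun n => ?_)
    ((summable_geometric_of_lt_one (Real.exp_pos _).le hlt).mul_left
      (Real.exp (c * ((2 * d - 1) ^ 2 / 4 - d ^ 2))))
  have : Real.exp (-c) ^ n = Real.exp ((n : ℝ) * (-c)) := by
    rw [← Real.exp_nat_mul]
  rw [this, ← Real.exp_add]
  apply Real.exp_le_exp.mpr
  nlinarith [mul_nonneg hc.le (sq_nonneg ((n : ℝ) + (2 * d - 1) / 2))]

lemma aux_summable (c d : ℝ) (hc : 0 < c) :
    Summable fun k : ℤ => Real.exp (-c * ((k : ℝ) + d) ^ 2) := by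
  refine Summable.of_nat_of_neg ?_ ?_
  · exact (aux_summable_nat c d hc).congr fun n => by norm_num
  · exact (aux_summable_nat c (-d) hc).congr fun n => by
      congr 1; push_cast; ring

def e1 : (ℤ × ℤ) ⊕ (ℤ × ℤ) ≃ ℤ × ℤ where
  toFun x := match x with
    | .inl (u, v) => (u + v, u - v)
    | .inr (u, v) => (u - v, u + v + 1)
  invFun p :=
    if (p.1 + p.2) % 2 = 0 then .inl ((p.1 + p.2) / 2, (p.1 - p.2) / 2)
    else .inr ((p.1 + p.2 - 1) / 2, (p.2 - p.1 - 1) / 2)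
  left_inv := by
    rintro (⟨u, v⟩ | ⟨u, v⟩) <;> simp only [] <;> split_ifs with h <;>
      simp_all [Prod.ext_iff] <;> omega
  right_inv := by
    rintro ⟨m, n⟩
    by_cases h : (m + n) % 2 = 0 <;> simp only [h, if_true, if_false, reduceIte] <;>
      simp_all [Prod.ext_iff] <;> omega

def e2 : (ℤ × ℤ) ⊕ (ℤ × ℤ) ≃ ℤ × ℤ where
  toFun x := match x with
    | .inl (r, s) => (r + s, r - s)
    | .inr (r, s) => (r + s, s - r - 1)
  invFun p :=
    if (p.1 + p.2) % 2 = 0 then .inl ((p.1 + p.2) / 2, (p.1 - p.2) / 2)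
    else .inr ((p.1 - p.2 - 1) / 2, (p.1 + p.2 + 1) / 2)
  left_inv := by
    rintro (⟨u, v⟩ | ⟨u, v⟩) <;> simp only [] <;> split_ifs with h <;>
      simp_all [Prod.ext_iff] <;> omega
  right_inv := by
    rintro ⟨m, n⟩
    by_cases h : (m + n) % 2 = 0 <;> simp only [h, if_true, if_false, reduceIte] <;>
      simp_all [Prod.ext_iff] <;> omega

lemma hasSum_sumElim {α β : Type*} {f : α → ℝ} {g : β → ℝ} {a b : ℝ}
    (hf : HasSum f a) (hg : HasSum g b) : HasSum (Sum.elim f g) (a + b) := by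
  have h1 : HasSum (Sum.elim f (0 : β → ℝ)) a := by
    refine (Function.Injective.hasSum_iff Sum.inl_injective ?_).mp hf
    rintro (x | x) hx
    · exact absurd ⟨x, rfl⟩ hx
    · rfl
  have h2 : HasSum (Sum.elim (0 : α → ℝ) g) b := by
    refine (Function.Injective.hasSum_iff Sum.inr_injective ?_).mp hg
    rintro (x | x) hx
    · rfl
    · exact absurd ⟨x, rfl⟩ hx
  have := h1.add h2
  convert this using 1
  funext x
  rcases x with x | x <;> simp

/-- Splitting a double sum over `ℤ × ℤ` by the parity of the coordinate sum,
using the equivalence `e1`. -/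
lemma split_lemma1 (f g h : ℤ → ℝ) (A G H ε : ℝ)
    (hf : HasSum f A) (hg : HasSum g G) (hh : HasSum h H)
    (hfn : Summable fun k => ‖f k‖) (hgn : Summable fun k => ‖g k‖)
    (hhn : Summable fun k => ‖h k‖)
    (heq1 : ∀ u v : ℤ, f (u + v) * f (u - v) = g u * g v)
    (heq2 : ∀ u v : ℤ, f (u - v) * f (u + v + 1) = ε * (h u * h v)) :
    A * A = G * G + ε * (H * H) := by
  have hprod : HasSum (fun p : ℤ × ℤ => f p.1 * f p.2) (A * A) :=
    hf.mul hf (summable_mul_of_summable_norm hfn hfn)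
  have hGp : HasSum (fun q : ℤ × ℤ => g q.1 * g q.2) (G * G) :=
    hg.mul hg (summable_mul_of_summable_norm hgn hgn)
  have hHp : HasSum (fun q : ℤ × ℤ => ε * (h q.1 * h q.2)) (ε * (H * H)) :=
    (hh.mul hh (summable_mul_of_summable_norm hhn hhn)).mul_left ε
  have keyfun : ((fun p : ℤ × ℤ => f p.1 * f p.2) ∘ e1) =
      Sum.elim (fun q : ℤ × ℤ => g q.1 * g q.2)
        (fun q : ℤ × ℤ => ε * (h q.1 * h q.2)) := by
    funext x
    rcases x with ⟨u, v⟩ | ⟨u, v⟩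
    · exact heq1 u v
    · exact heq2 u v
  have hsplit : HasSum ((fun p : ℤ × ℤ => f p.1 * f p.2) ∘ e1)
      (G * G + ε * (H * H)) := by
    rw [keyfun]; exact hasSum_sumElim hGp hHp
  exact hprod.unique ((Equiv.hasSum_iff e1).mp hsplit)

/-- Splitting a double sum over `ℤ × ℤ` by the parity of the coordinate sum,
using the equivalence `e2`. -/
lemma split_lemma2 (f g h : ℤ → ℝ) (A G H : ℝ)
    (hf : HasSum f A) (hg : HasSum g G) (hh : HasSum h H)
    (hfn : Summable fun k => ‖f k‖) (hgn : Summable fun k => ‖g k‖)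
    (hhn : Summable fun k => ‖h k‖)
    (heq1 : ∀ r s : ℤ, f (r + s) * f (r - s) = g r * h s)
    (heq2 : ∀ r s : ℤ, f (r + s) * f (s - r - 1) = g r * h s) :
    A * A = G * H + G * H := by
  have hprod : HasSum (fun p : ℤ × ℤ => f p.1 * f p.2) (A * A) :=
    hf.mul hf (summable_mul_of_summable_norm hfn hfn)
  have hGH : HasSum (fun q : ℤ × ℤ => g q.1 * h q.2) (G * H) :=
    hg.mul hh (summable_mul_of_summable_norm hgn hhn)
  have keyfun : ((fun p : ℤ × ℤ => f p.1 * f p.2) ∘ e2) =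
      Sum.elim (fun q : ℤ × ℤ => g q.1 * h q.2)
        (fun q : ℤ × ℤ => g q.1 * h q.2) := by
    funext x
    rcases x with ⟨u, v⟩ | ⟨u, v⟩
    · exact heq1 u v
    · exact heq2 u v
  have hsplit : HasSum ((fun p : ℤ × ℤ => f p.1 * f p.2) ∘ e2) (G * H + G * H) := by
    rw [keyfun]; exact hasSum_sumElim hGH hGH
  exact hprod.unique ((Equiv.hasSum_iff e2).mp hsplit)

lemma theta4_eq_theta2 :
    (∑' k : ℤ, (-1 : ℝ) ^ k * Real.exp (-π * (k : ℝ) ^ 2)) =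
      ∑' k : ℤ, Real.exp (-π * ((k : ℝ) + 1 / 2) ^ 2) := by
  have key := Complex.tsum_exp_neg_quadratic (a := 1) (by norm_num) (Complex.I / 2)
  have h1 : ∀ n : ℤ,
      Complex.exp (-(π : ℂ) * 1 * (n : ℂ) ^ 2 + 2 * (π : ℂ) * (Complex.I / 2) * (n : ℂ)) =
        ((((-1 : ℝ) ^ n * Real.exp (-π * (n : ℝ) ^ 2)) : ℝ) : ℂ) := by
    intro n
    have e1 : -(π : ℂ) * 1 * (n : ℂ) ^ 2 + 2 * (π : ℂ) * (Complex.I / 2) * (n : ℂ) =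
        (((-π * (n : ℝ) ^ 2 : ℝ)) : ℂ) + (n : ℂ) * ((π : ℂ) * Complex.I) := by
      push_cast; ring
    rw [e1, Complex.exp_add, Complex.exp_int_mul, Complex.exp_pi_mul_I]
    push_cast
    ring
  have h2 : ∀ n : ℤ,
      Complex.exp (-(π : ℂ) / 1 * ((n : ℂ) + Complex.I * (Complex.I / 2)) ^ 2) =
        ((Real.exp (-π * ((n : ℝ) - 1 / 2) ^ 2) : ℝ) : ℂ) := by
    intro n
    have e2 : -(π : ℂ) / 1 * ((n : ℂ) + Complex.I * (Complex.I / 2)) ^ 2 =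
        (((-π * ((n : ℝ) - 1 / 2) ^ 2 : ℝ)) : ℂ) := by
      have : Complex.I * (Complex.I / 2) = -(1 / 2) := by
        rw [mul_div_assoc', Complex.I_mul_I]; norm_num
      rw [this]; push_cast; ring
    rw [e2, Complex.ofReal_exp]
  simp_rw [h1, h2] at key
  rw [Complex.one_cpow, show (1 : ℂ) / 1 = 1 from by norm_num, one_mul,
    ← Complex.ofReal_tsum, ← Complex.ofReal_tsum] at key
  have key' := Complex.ofReal_inj.mp key
  rw [key']
  rw [← (Equiv.addRight (1 : ℤ)).tsum_eq (fun k : ℤ => Real.exp (-π * ((k : ℝ) - 1 / 2) ^ 2))]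
  apply tsum_congr
  intro n
  simp only [Equiv.coe_addRight]
  congr 1
  push_cast
  ring

theorem theta3_pow_four_eq_two_theta4_pow_four :
    (∑' k : ℤ, Real.exp (-π * (k : ℝ) ^ 2)) ^ 4 =
      2 * (∑' k : ℤ, (-1 : ℝ) ^ k * Real.exp (-π * (k : ℝ) ^ 2)) ^ 4 := by
  have hne : (-1 : ℝ) ≠ 0 := by norm_num
  have sm3 : Summable fun k : ℤ => Real.exp (-π * (k : ℝ) ^ 2) :=
    (aux_summable π 0 pi_pos).congr fun k => by norm_num
  have smT3 : Summable fun k : ℤ => Real.exp (-(2 * π) * (k : ℝ) ^ 2) :=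
    (aux_summable (2 * π) 0 (by positivity)).congr fun k => by norm_num
  have smT2 : Summable fun k : ℤ => Real.exp (-(2 * π) * ((k : ℝ) + 1 / 2) ^ 2) :=
    aux_summable (2 * π) (1 / 2) (by positivity)
  have smP : Summable fun k : ℤ => Real.exp (-π * ((k : ℝ) + 1 / 2) ^ 2) :=
    aux_summable π (1 / 2) pi_pos
  have hsabs : ∀ k : ℤ, |(-1 : ℝ) ^ k| = 1 := fun k => by
    rcases Int.even_or_odd k with hk | hk
    · rw [hk.neg_one_zpow, abs_one]
    · rw [hk.neg_one_zpow, abs_neg, abs_one]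
  have habs : ∀ k : ℤ, ‖(-1 : ℝ) ^ k * Real.exp (-π * (k : ℝ) ^ 2)‖
      = Real.exp (-π * (k : ℝ) ^ 2) := fun k => by
    rw [Real.norm_eq_abs, abs_mul, hsabs k, one_mul, abs_of_pos (Real.exp_pos _)]
  have sm4 : Summable fun k : ℤ => (-1 : ℝ) ^ k * Real.exp (-π * (k : ℝ) ^ 2) :=
    Summable.of_abs (sm3.congr fun k => (habs k).symm)
  have nrm : ∀ (f : ℤ → ℝ), (∀ k, 0 < f k) → Summable f → Summable fun k => ‖f k‖ :=
    fun f hf hsf => hsf.congr fun k => (Real.norm_of_nonneg (hf k).le).symm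
  set S3 := ∑' k : ℤ, Real.exp (-π * (k : ℝ) ^ 2) with hS3
  set S4 := ∑' k : ℤ, (-1 : ℝ) ^ k * Real.exp (-π * (k : ℝ) ^ 2) with hS4
  set T3 := ∑' k : ℤ, Real.exp (-(2 * π) * (k : ℝ) ^ 2) with hT3
  set T2 := ∑' k : ℤ, Real.exp (-(2 * π) * ((k : ℝ) + 1 / 2) ^ 2) with hT2
  set P := ∑' k : ℤ, Real.exp (-π * ((k : ℝ) + 1 / 2) ^ 2) with hP
  have expeq : ∀ a b : ℝ, a = b → Real.exp a = Real.exp b := fun a b hab => by rw [hab]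
  -- Key 1
  have key1 : S3 * S3 = T3 * T3 + 1 * (T2 * T2) := by
    refine split_lemma1 _ _ _ _ _ _ _ sm3.hasSum smT3.hasSum smT2.hasSum
      (nrm _ (fun k => Real.exp_pos _) sm3) (nrm _ (fun k => Real.exp_pos _) smT3)
      (nrm _ (fun k => Real.exp_pos _) smT2) (fun u v => ?_) (fun u v => ?_)
    · rw [← Real.exp_add, ← Real.exp_add]
      exact expeq _ _ (by push_cast; ring)
    · rw [one_mul, ← Real.exp_add, ← Real.exp_add]
      exact expeq _ _ (by push_cast; ring)
  -- Key 2
  have key2 : S4 * S4 = T3 * T3 + (-1) * (T2 * T2) := by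
    refine split_lemma1 _ _ _ _ _ _ _ sm4.hasSum smT3.hasSum smT2.hasSum
      (sm3.congr fun k => (habs k).symm) (nrm _ (fun k => Real.exp_pos _) smT3)
      (nrm _ (fun k => Real.exp_pos _) smT2) (fun u v => ?_) (fun u v => ?_)
    · have hsign : (-1 : ℝ) ^ (u + v) * (-1 : ℝ) ^ (u - v) = 1 := by
        rw [← zpow_add₀ hne]
        exact Even.neg_one_zpow ⟨u, by ring⟩
      have hexp : Real.exp (-π * ((u + v : ℤ) : ℝ) ^ 2)
          * Real.exp (-π * ((u - v : ℤ) : ℝ) ^ 2) =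
          Real.exp (-(2 * π) * (u : ℝ) ^ 2) * Real.exp (-(2 * π) * (v : ℝ) ^ 2) := by
        rw [← Real.exp_add, ← Real.exp_add]
        exact expeq _ _ (by push_cast; ring)
      calc ((-1 : ℝ) ^ (u + v) * Real.exp (-π * ((u + v : ℤ) : ℝ) ^ 2))
            * ((-1 : ℝ) ^ (u - v) * Real.exp (-π * ((u - v : ℤ) : ℝ) ^ 2))
          = ((-1 : ℝ) ^ (u + v) * (-1 : ℝ) ^ (u - v))
            * (Real.exp (-π * ((u + v : ℤ) : ℝ) ^ 2)
              * Real.exp (-π * ((u - v : ℤ) : ℝ) ^ 2)) := by ring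
        _ = _ := by rw [hsign, hexp, one_mul]
    · have hsign : (-1 : ℝ) ^ (u - v) * (-1 : ℝ) ^ (u + v + 1) = -1 := by
        rw [← zpow_add₀ hne]
        exact Odd.neg_one_zpow ⟨u, by ring⟩
      have hexp : Real.exp (-π * ((u - v : ℤ) : ℝ) ^ 2)
          * Real.exp (-π * ((u + v + 1 : ℤ) : ℝ) ^ 2) =
          Real.exp (-(2 * π) * ((u : ℝ) + 1 / 2) ^ 2)
            * Real.exp (-(2 * π) * ((v : ℝ) + 1 / 2) ^ 2) := by
        rw [← Real.exp_add, ← Real.exp_add]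
        exact expeq _ _ (by push_cast; ring)
      calc ((-1 : ℝ) ^ (u - v) * Real.exp (-π * ((u - v : ℤ) : ℝ) ^ 2))
            * ((-1 : ℝ) ^ (u + v + 1) * Real.exp (-π * ((u + v + 1 : ℤ) : ℝ) ^ 2))
          = ((-1 : ℝ) ^ (u - v) * (-1 : ℝ) ^ (u + v + 1))
            * (Real.exp (-π * ((u - v : ℤ) : ℝ) ^ 2)
              * Real.exp (-π * ((u + v + 1 : ℤ) : ℝ) ^ 2)) := by ring
        _ = _ := by rw [hsign, hexp]
  -- Key P
  have keyP : P * P = T2 * T3 + T2 * T3 := by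
    refine split_lemma2 _ _ _ _ _ _ smP.hasSum smT2.hasSum smT3.hasSum
      (nrm _ (fun k => Real.exp_pos _) smP) (nrm _ (fun k => Real.exp_pos _) smT2)
      (nrm _ (fun k => Real.exp_pos _) smT3) (fun r s => ?_) (fun r s => ?_)
    · rw [← Real.exp_add, ← Real.exp_add]
      exact expeq _ _ (by push_cast; ring)
    · rw [← Real.exp_add, ← Real.exp_add]
      exact expeq _ _ (by push_cast; ring)
  have hS4P : S4 = P := theta4_eq_theta2
  have hQ : S4 * S4 = 2 * (T2 * T3) := by rw [hS4P]; linarith [keyP]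
  have key2' : S4 * S4 = T3 * T3 - T2 * T2 := by linarith [key2]
  have key1' : S3 * S3 = T3 * T3 + T2 * T2 := by linarith [key1]
  linear_combination (S3 ^ 2 + T3 ^ 2 + T2 ^ 2) * key1'
    - (S4 ^ 2 + T3 ^ 2 - T2 ^ 2) * key2' - (S4 ^ 2 + 2 * T2 * T3) * hQ
end

section
/- For the standard Gaussian g₀ and the square lattice Λ_□ = (1/√2)ℤ × (1/√2)ℤ of redundancy 2, the ratio of the sharp upper to the sharp lower Gabor frame bound is √2: explicitly, (Σ_{k∈ℤ} e^{-πk²})² = √2 · (Σ_{k∈ℤ}(-1)^k e^{-πk²})². -/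
/-!
Let `T = ∑ e^{-2πk²}` and `U = ∑ e^{-2π(k+1/2)²}`. The pairs `(a, b) ∈ ℤ²` with `a + b` even are
exactly the `(m + n, m - n)`, and those with `a + b` odd the `(m + n + 1, m - n)`; since then
`a² + b² = 2m² + 2n²`, resp. `2(m + 1/2)² + 2(n + 1/2)²`, squaring the two theta sums gives
`(∑ e^{-πk²})² = T² + U²` and `(∑ (-1)^k e^{-πk²})² = T² - U²`. Splitting `ℤ` into even and odd
integers gives `T + U = ∑ e^{-πk²/2}`, which Poisson summation identifies with `√2 T`. Hence
`U = (√2 - 1) T`, and both sides of the identity equal `(4 - 2√2) T²`.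
-/

open Real Function Set

section Splitting

variable {α β γ δ : Type*} [AddCommMonoid α] [TopologicalSpace α] [ContinuousAdd α] {a b : α}

theorem HasSum.add_isCompl_range {f : β → α} {i : γ → β} {j : δ → β} (hi : Injective i)
    (hj : Injective j) (hij : IsCompl (range i) (range j)) (ha : HasSum (f ∘ i) a)
    (hb : HasSum (f ∘ j) b) : HasSum f (a + b) :=
  (hi.hasSum_range_iff.2 ha).add_isCompl hij (hj.hasSum_range_iff.2 hb)

theorem HasSum.int_even_add_odd {f : ℤ → α} (he : HasSum (fun k ↦ f (2 * k)) a)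
    (ho : HasSum (fun k ↦ f (2 * k + 1)) b) : HasSum f (a + b) := by
  have hev : (range fun k : ℤ ↦ 2 * k) = {n | Even n} :=
    ext fun n ↦ ⟨fun ⟨m, hm⟩ ↦ ⟨m, by dsimp only at hm ⊢; omega⟩,
      fun ⟨m, hm⟩ ↦ ⟨m, by dsimp only; omega⟩⟩
  have hodd : (range fun k : ℤ ↦ 2 * k + 1) = {n | Odd n} :=
    ext fun n ↦ ⟨fun ⟨m, hm⟩ ↦ ⟨m, by dsimp only at hm ⊢; omega⟩,
      fun ⟨m, hm⟩ ↦ ⟨m, by dsimp only; omega⟩⟩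
  exact he.add_isCompl_range (mul_right_injective₀ two_ne_zero)
    ((add_left_injective 1).comp (mul_right_injective₀ two_ne_zero))
    (hev ▸ hodd ▸ Int.isCompl_even_odd) ho

theorem HasSum.int_prod_rotate_add {f : ℤ × ℤ → α}
    (h₀ : HasSum (fun q : ℤ × ℤ ↦ f (q.1 + q.2, q.1 - q.2)) a)
    (h₁ : HasSum (fun q : ℤ × ℤ ↦ f (q.1 + q.2 + 1, q.1 - q.2)) b) : HasSum f (a + b) := by
  have inj₀ : Injective fun q : ℤ × ℤ ↦ (q.1 + q.2, q.1 - q.2) := fun p q h ↦ by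
    simp only [Prod.ext_iff] at h ⊢; omega
  have inj₁ : Injective fun q : ℤ × ℤ ↦ (q.1 + q.2 + 1, q.1 - q.2) := fun p q h ↦ by
    simp only [Prod.ext_iff] at h ⊢; omega
  have hev : (range fun q : ℤ × ℤ ↦ (q.1 + q.2, q.1 - q.2)) =
      (fun x ↦ x.1 + x.2) ⁻¹' {n | Even n} :=
    ext fun ⟨x, _⟩ ↦ ⟨fun ⟨⟨m, _⟩, h⟩ ↦ ⟨m, by simp only [Prod.ext_iff] at h ⊢; omega⟩,
      fun ⟨m, h⟩ ↦ ⟨(m, x - m), by simp only [Prod.ext_iff] at h ⊢; omega⟩⟩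
  have hodd : (range fun q : ℤ × ℤ ↦ (q.1 + q.2 + 1, q.1 - q.2)) =
      (fun x ↦ x.1 + x.2) ⁻¹' {n | Odd n} :=
    ext fun ⟨x, _⟩ ↦ ⟨fun ⟨⟨m, _⟩, h⟩ ↦ ⟨m, by simp only [Prod.ext_iff] at h ⊢; omega⟩,
      fun ⟨m, h⟩ ↦ ⟨(m, x - m - 1), by simp only [Prod.ext_iff] at h ⊢; omega⟩⟩
  exact h₀.add_isCompl_range inj₀ inj₁ (hev ▸ hodd ▸ Int.isCompl_even_odd.preimage _) h₁

end Splitting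

theorem hasSum_mul_self_tsum_sq {ι R : Type*} [NormedRing R] [CompleteSpace R] {f : ι → R}
    (hf : Summable fun k ↦ ‖f k‖) :
    HasSum (fun q : ι × ι ↦ f q.1 * f q.2) ((∑' k, f k) ^ 2) :=
  sq (∑' k, f k) ▸ hf.of_norm.hasSum.mul hf.of_norm.hasSum (summable_mul_of_summable_norm hf hf)

section Gaussian

variable {t : ℝ}

lemma summable_exp_neg_pi_mul_add_sq (ht : 0 < t) (c : ℝ) :
    Summable fun k : ℤ ↦ exp (-π * t * (k + c) ^ 2) :=
  (HurwitzKernelBounds.summable_f_int 0 c ht).congr fun k ↦ by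
    simp only [HurwitzKernelBounds.f_int, pow_zero, one_mul]; ring_nf

lemma summable_exp_neg_pi_mul_sq (ht : 0 < t) : Summable fun k : ℤ ↦ exp (-π * t * k ^ 2) := by
  simpa using summable_exp_neg_pi_mul_add_sq ht 0

lemma summable_norm_zpow_mul_exp_neg_pi_mul_sq (ht : 0 < t) {ε : ℝ} (hε : |ε| = 1) :
    Summable fun k : ℤ ↦ ‖ε ^ k * exp (-π * t * k ^ 2)‖ := by
  simpa [abs_zpow, hε] using summable_exp_neg_pi_mul_sq ht

theorem tsum_zpow_mul_exp_neg_pi_mul_sq_sq (ht : 0 < t) {ε : ℝ} (hε : ε ^ 2 = 1) :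
    (∑' k : ℤ, ε ^ k * exp (-π * t * k ^ 2)) ^ 2 =
      (∑' k : ℤ, exp (-π * (2 * t) * k ^ 2)) ^ 2 +
        ε * (∑' k : ℤ, exp (-π * (2 * t) * (k + 1 / 2) ^ 2)) ^ 2 := by
  have hε₀ : ε ≠ 0 := by rintro rfl; norm_num at hε
  have hε₁ : |ε| = 1 := (pow_eq_one_iff_of_nonneg (abs_nonneg ε) two_ne_zero).1 (by rwa [sq_abs])
  have hsq (m : ℤ) : ε ^ (2 * m) = 1 := by rw [zpow_mul, zpow_ofNat, hε, one_zpow]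
  have h2t : 0 < 2 * t := by positivity
  refine (hasSum_mul_self_tsum_sq (summable_norm_zpow_mul_exp_neg_pi_mul_sq ht hε₁)).unique
    (HasSum.int_prod_rotate_add ?_ ?_)
  · refine (hasSum_mul_self_tsum_sq ?_).congr_fun fun q ↦ ?_
    · simpa using summable_exp_neg_pi_mul_sq h2t
    rw [mul_mul_mul_comm, ← zpow_add₀ hε₀, show q.1 + q.2 + (q.1 - q.2) = 2 * q.1 by ring, hsq,
      one_mul, ← exp_add, ← exp_add]
    push_cast; ring_nf
  · refine ((hasSum_mul_self_tsum_sq ?_).mul_left ε).congr_fun fun q ↦ ?_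
    · simpa using summable_exp_neg_pi_mul_add_sq h2t (1 / 2)
    rw [mul_mul_mul_comm, ← zpow_add₀ hε₀,
      show q.1 + q.2 + 1 + (q.1 - q.2) = 2 * q.1 + 1 by ring, zpow_add_one₀ hε₀, hsq, one_mul,
      ← exp_add, ← exp_add]
    push_cast; ring_nf

theorem tsum_exp_neg_pi_mul_sq_even_add_odd (ht : 0 < t) :
    ∑' k : ℤ, exp (-π * (t / 2) * k ^ 2) =
      ∑' k : ℤ, exp (-π * (2 * t) * k ^ 2) + ∑' k : ℤ, exp (-π * (2 * t) * (k + 1 / 2) ^ 2) := by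
  have h2t : 0 < 2 * t := by positivity
  refine (HasSum.int_even_add_odd ?_ ?_).tsum_eq
  · refine (summable_exp_neg_pi_mul_sq h2t).hasSum.congr_fun fun k ↦ ?_
    push_cast; ring_nf
  · refine (summable_exp_neg_pi_mul_add_sq h2t (1 / 2)).hasSum.congr_fun fun k ↦ ?_
    push_cast; ring_nf

end Gaussian

theorem tsum_exp_neg_pi_half_mul_sq :
    ∑' k : ℤ, exp (-π * (1 / 2) * k ^ 2) = √2 * ∑' k : ℤ, exp (-π * 2 * k ^ 2) := by
  rw [tsum_exp_neg_mul_int_sq (by norm_num), ← sqrt_eq_rpow, one_div (2 : ℝ), sqrt_inv, one_div,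
    inv_inv]
  congr with k
  ring_nf

theorem square_lattice_condition_number :
    (∑' k : ℤ, Real.exp (-π * (k : ℝ) ^ 2)) ^ 2 =
      Real.sqrt 2 * (∑' k : ℤ, (-1 : ℝ) ^ k * Real.exp (-π * (k : ℝ) ^ 2)) ^ 2 := by
  have hS := tsum_zpow_mul_exp_neg_pi_mul_sq_sq one_pos (one_pow 2)
  have hA := tsum_zpow_mul_exp_neg_pi_mul_sq_sq one_pos (ε := -1) (by norm_num)
  have hTU := tsum_exp_neg_pi_mul_sq_even_add_odd one_pos
  simp only [one_zpow, one_mul, mul_one] at hS hA hTU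
  rw [tsum_exp_neg_pi_half_mul_sq] at hTU
  set T := ∑' k : ℤ, exp (-π * 2 * k ^ 2)
  set U := ∑' k : ℤ, exp (-π * 2 * (k + 1 / 2) ^ 2)
  have hU : U = (√2 - 1) * T := by linarith
  rw [hS, hA, hU]
  linear_combination (√2 - 1) * T ^ 2 * sq_sqrt zero_le_two
end

section
/- Let q = e^{-2π/√3}. Define a(q) = Σ_{k,l∈ℤ} q^{k²+kl+l²}, b(q) = Σ_{k,l∈ℤ} q^{k²+kl+l²}·ζ₃^{k-l} with ζ₃ = e^{2πi/3}, and c(q) = Σ_{k,l∈ℤ} q^{(k+1/3)²+(k+1/3)(l+1/3)+(l+1/3)²}. Then b(e^{-2π/√3}) = c(e^{-2π/√3}). -/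
open Real

/-!
Both sides are theta series of the hexagonal form `k² + kl + l²` with characteristics:
`b = hexTheta a 0 0 (1/3) (-1/3)` and `c = hexTheta a (1/3) (1/3) 0 0` for `a = 2/√3`.
Poisson summation in the second variable turns `hexTheta a x y u v` into a Gaussian sum over
`ℤ²` in diagonal form `exp (-(3πa/4) (k + x)² - (π/a) (n - v)²)` times a character. At
`a = 2/√3` the two coefficients agree, so exchanging `k` and `n` gives the same kind of sum with
characteristics `(-v, u, y, -x)`, up to a constant phase that vanishes for `b`.
-/

section

open Complex

lemma summable_exp_neg_mul_add_sq {c : ℝ} (hc : 0 < c) (x : ℝ) :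
    Summable fun n : ℤ => rexp (-c * (n + x) ^ 2) := by
  have hτ : 0 < ((c / π : ℝ) * I : ℂ).im := by simp [div_pos hc pi_pos]
  have h := ((summable_jacobiTheta₂_term_iff ((c * x / π : ℝ) * I) _).mpr hτ).norm
  simp_rw [norm_jacobiTheta₂_term] at h
  refine (h.mul_left (rexp (-c * x ^ 2))).congr fun n => ?_
  rw [← Real.exp_add]
  congr 1
  simp only [mul_I_im, ofReal_re]
  field_simp
  ring

lemma summable_exp_neg_mul_add_sq_sub_mul_add_sq {α β : ℝ} (hα : 0 < α) (hβ : 0 < β)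
    (x y : ℝ) :
    Summable fun p : ℤ × ℤ => rexp (-α * (p.1 + x) ^ 2 - β * (p.2 + y) ^ 2) := by
  refine ((summable_exp_neg_mul_add_sq hα x).mul_of_nonneg (summable_exp_neg_mul_add_sq hβ y)
    (fun _ => (exp_pos _).le) (fun _ => (exp_pos _).le)).congr fun p => ?_
  rw [← Real.exp_add, sub_eq_add_neg, neg_mul β]

lemma norm_cexp_ofReal_add_ofReal_mul_I (r s : ℝ) : ‖cexp (r + s * I)‖ = rexp r := by
  simp [norm_exp]

lemma tsum_cexp_neg_mul_add_sq_add_mul_I {a : ℂ} (ha : 0 < a.re) (w v : ℂ) :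
    ∑' l : ℤ, cexp (-π * a * (l + w) ^ 2 + 2 * π * I * v * l) =
      1 / a ^ (1 / 2 : ℂ) *
        ∑' n : ℤ, cexp (-π / a * (n - v) ^ 2 + 2 * π * I * w * (n - v)) := by
  have ha' : a ≠ 0 := by rintro rfl; simp at ha
  calc ∑' l : ℤ, cexp (-π * a * (l + w) ^ 2 + 2 * π * I * v * l)
      = ∑' l : ℤ, cexp (-π * a * w ^ 2) *
          cexp (-π * a * l ^ 2 + 2 * π * (-a * w + I * v) * l) := by
        refine tsum_congr fun l => ?_
        rw [← Complex.exp_add]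
        ring_nf
    _ = cexp (-π * a * w ^ 2) * (1 / a ^ (1 / 2 : ℂ) *
          ∑' n : ℤ, cexp (-π / a * (n + I * (-a * w + I * v)) ^ 2)) := by
        rw [tsum_mul_left, tsum_exp_neg_quadratic ha]
    _ = _ := by
        rw [mul_left_comm, ← tsum_mul_left]
        congr 2 with n
        rw [← Complex.exp_add]
        congr 1
        field_simp
        linear_combination
          (-a ^ 2 * w ^ 2 - (I ^ 2 + 1) * v ^ 2 - 2 * (n - v) * v + 2 * I * a * w * v) * I_sq

noncomputable def hexTheta (a x y u v : ℝ) : ℂ :=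
  ∑' p : ℤ × ℤ, cexp (-π * a * ((p.1 + x) ^ 2 + (p.1 + x) * (p.2 + y) + (p.2 + y) ^ 2) +
    2 * π * I * (u * p.1 + v * p.2))

lemma summable_hexTheta_term {a : ℝ} (ha : 0 < a) (x y u v : ℝ) :
    Summable fun p : ℤ × ℤ =>
      cexp (-π * a * ((p.1 + x) ^ 2 + (p.1 + x) * (p.2 + y) + (p.2 + y) ^ 2) +
        2 * π * I * (u * p.1 + v * p.2)) := by
  have hpa : 0 < π * a / 2 := by positivity
  refine (summable_exp_neg_mul_add_sq_sub_mul_add_sq hpa hpa x y).of_norm_bounded fun p => ?_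
  have h : -π * a * ((p.1 + x) ^ 2 + (p.1 + x) * (p.2 + y) + (p.2 + y) ^ 2) +
      2 * π * I * (u * p.1 + v * p.2) =
      ((-π * a * ((p.1 + x) ^ 2 + (p.1 + x) * (p.2 + y) + (p.2 + y) ^ 2) : ℝ) : ℂ) +
      ((2 * π * (u * p.1 + v * p.2) : ℝ) : ℂ) * I := by
    push_cast
    ring
  rw [h, norm_cexp_ofReal_add_ofReal_mul_I, Real.exp_le_exp]
  nlinarith [sq_nonneg ((p.1 : ℝ) + x + (p.2 + y))]

lemma summable_hexTheta_dual_term {a : ℝ} (ha : 0 < a) (x y u v : ℝ) :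
    Summable fun p : ℤ × ℤ =>
      cexp (-(3 * π * a / 4) * (p.1 + x) ^ 2 - π / a * (p.2 - v) ^ 2 +
        2 * π * I * (u * p.1 + (p.2 - v) * (y + (p.1 + x) / 2))) := by
  refine (summable_exp_neg_mul_add_sq_sub_mul_add_sq (α := 3 * π * a / 4) (β := π / a)
    (by positivity) (by positivity) x (-v)).of_norm_bounded fun p => le_of_eq ?_
  have h : -(3 * π * a / 4) * (p.1 + x) ^ 2 - π / a * (p.2 - v) ^ 2 +
      2 * π * I * (u * p.1 + (p.2 - v) * (y + (p.1 + x) / 2)) =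
      ((-(3 * π * a / 4) * (p.1 + x) ^ 2 - π / a * (p.2 + -v) ^ 2 : ℝ) : ℂ) +
      ((2 * π * (u * p.1 + (p.2 - v) * (y + (p.1 + x) / 2)) : ℝ) : ℂ) * I := by
    push_cast
    ring
  rw [h, norm_cexp_ofReal_add_ofReal_mul_I]

theorem hexTheta_eq_tsum_poisson {a : ℝ} (ha : 0 < a) (x y u v : ℝ) :
    hexTheta a x y u v = 1 / (a : ℂ) ^ (1 / 2 : ℂ) * ∑' p : ℤ × ℤ,
      cexp (-(3 * π * a / 4) * (p.1 + x) ^ 2 - π / a * (p.2 - v) ^ 2 +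
        2 * π * I * (u * p.1 + (p.2 - v) * (y + (p.1 + x) / 2))) := by
  rw [hexTheta, (summable_hexTheta_term ha x y u v).tsum_prod,
    (summable_hexTheta_dual_term ha x y u v).tsum_prod, ← tsum_mul_left]
  refine tsum_congr fun k => ?_
  -- complete the square in `l`: `Q(k + x, l + y) = (l + y + (k + x)/2)² + 3(k + x)²/4`
  calc _ = ∑' l : ℤ, cexp (-(3 * π * a / 4) * (k + x) ^ 2 + 2 * π * I * u * k) *
        cexp (-π * a * (l + (y + (k + x) / 2)) ^ 2 + 2 * π * I * v * l) := by
        refine tsum_congr fun l => ?_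
        rw [← Complex.exp_add]
        ring_nf
    _ = _ := by
        rw [tsum_mul_left, tsum_cexp_neg_mul_add_sq_add_mul_I (by simpa using ha), mul_left_comm,
          ← tsum_mul_left]
        congr 1
        refine tsum_congr fun n => ?_
        rw [← Complex.exp_add]
        ring_nf

theorem hexTheta_functional_equation {a : ℝ} (ha : 0 < a) (hsq : 3 * a ^ 2 = 4)
    (x y u v : ℝ) :
    hexTheta a x y u v = cexp (-(2 * π * I * (x * u + v * y))) * hexTheta a (-v) u y (-x) := by
  have hdual : (π : ℂ) / a = 3 * π * a / 4 := by
    have hsq' : 3 * (a : ℂ) ^ 2 = 4 := by exact_mod_cast hsq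
    rw [div_eq_iff (ofReal_ne_zero.mpr ha.ne')]
    linear_combination (-π / 4) * hsq'
  rw [hexTheta_eq_tsum_poisson ha, hexTheta_eq_tsum_poisson ha, mul_left_comm]
  congr 1
  rw [← tsum_mul_left, ← (Equiv.prodComm ℤ ℤ).tsum_eq]
  refine tsum_congr fun p => ?_
  rw [Equiv.prodComm_apply, ← Complex.exp_add]
  congr 1
  push_cast
  simp only [Prod.fst_swap, Prod.snd_swap]
  linear_combination ((p.2 + x) ^ 2 - (p.1 - v) ^ 2) * hdual

end

theorem cubic_theta_b_eq_c :
    (∑' p : ℤ × ℤ, (Real.exp (-(2 * π / Real.sqrt 3) *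
        ((p.1 : ℝ) ^ 2 + (p.1 : ℝ) * (p.2 : ℝ) + (p.2 : ℝ) ^ 2)) : ℂ) *
        Complex.exp (2 * π * Complex.I / 3) ^ (p.1 - p.2)) =
      ((∑' p : ℤ × ℤ, Real.exp (-(2 * π / Real.sqrt 3) *
        (((p.1 : ℝ) + 1 / 3) ^ 2 + ((p.1 : ℝ) + 1 / 3) * ((p.2 : ℝ) + 1 / 3) +
          ((p.2 : ℝ) + 1 / 3) ^ 2))) : ℝ) := by
  have ha : 0 < 2 / √3 := by positivity
  have hsq : 3 * (2 / √3) ^ 2 = 4 := by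
    rw [div_pow, sq_sqrt (by norm_num : (0 : ℝ) ≤ 3)]
    norm_num
  calc _ = hexTheta (2 / √3) 0 0 (1 / 3) (-1 / 3) := tsum_congr fun p => by
        rw [Complex.ofReal_exp, ← Complex.exp_int_mul, ← Complex.exp_add]
        congr 1
        push_cast
        ring
    _ = hexTheta (2 / √3) (1 / 3) (1 / 3) 0 0 := by
        rw [hexTheta_functional_equation ha hsq]
        norm_num
    _ = _ := by
        rw [Complex.ofReal_tsum]
        refine tsum_congr fun p => ?_
        rw [Complex.ofReal_exp]
        congr 1
        push_cast
        ring
end
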